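/- Physics-based update formula for the Hermite scaling parameter: Let N ∈ ℕ with N ≥ 2, α > 0, u ∈ ℝ, and let c_0, …, c_N be real numbers with c_0 ≠ 0. Define f(v) := Σ_{m=0}^N c_m·ψ_m^{α,u}(v) and ū := (∫_ℝ v·f(v) dv)/(∫_ℝ f(v) dv). Then 2·(∫_ℝ (v − ū)²·f(v) dv)/(∫_ℝ f(v) dv) = α²·(1 + √2·(c_2/c_0) − (c_1/c_0)²). -/

import Mathlib

open MeasureTheory Real Finset

/-- Physicists' Hermite polynomials: `H 0 x = 1`, `H 1 x = 2x`,
`H (n+1) x = 2x · H n x − 2n · H (n−1) x`. -/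
noncomputable def physHermite : ℕ → ℝ → ℝ
  | 0 => fun _ => 1
  | 1 => fun x => 2 * x
  | (n + 2) => fun x => 2 * x * physHermite (n + 1) x - 2 * ((n : ℝ) + 1) * physHermite n x

/-- Asymmetrically weighted Hermite function
`ψ_n^{α,u}(v) = (π·2^n·n!)^{-1/2} · H_n((v−u)/α) · exp(−((v−u)/α)²)`. -/
noncomputable def awHermite (α u : ℝ) (n : ℕ) (v : ℝ) : ℝ :=
  (Real.sqrt (Real.pi * 2 ^ n * (n.factorial : ℝ)))⁻¹ * physHermite n ((v - u) / α) *
    Real.exp (-((v - u) / α) ^ 2)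

/-- The weight `ω(v) = √π · α⁻¹ · exp(((v−u)/α)²)`. -/
noncomputable def hermiteWeight (α u : ℝ) (v : ℝ) : ℝ :=
  Real.sqrt Real.pi * α⁻¹ * Real.exp (((v - u) / α) ^ 2)

/-- Transformation matrix entries `ℙ_{n,m} = ∫ ψ_m^{α',u'}(v) · ψ_n^{α,u}(v) · ω(v) dv`. -/
noncomputable def transferMatrix (α' u' α u : ℝ) (n m : ℕ) : ℝ :=
  ∫ v : ℝ, awHermite α' u' m v * awHermite α u n v * hermiteWeight α u v

/-!
Write `φₙ(x) = Hₙ(x) e^{-x²}`. Rodrigues' relation `φₙ' = -φₙ₊₁` and integration by parts give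
`∫ xᵏ φₙ₊₁ = k ∫ xᵏ⁻¹ φₙ`, so `∫ xᵏ φₙ` vanishes for `k < n` and equals `n! √π` for `k = n`; hence
only `c₀, c₁, c₂` enter the moments of order `≤ 2` of `f`. Under `v = α x + u` the mean of a density
becomes `α m + u` and its variance `α² σ²`, which reduces the claim to the moments `c₀`, `c₁/√2`,
`c₀/2 + c₂/√2` of `∑ cₘ ψₘ^{1,0}`.
-/

lemma physHermite_add_two (n : ℕ) (x : ℝ) :
    physHermite (n + 2) x = 2 * x * physHermite (n + 1) x - 2 * (n + 1 : ℝ) * physHermite n x :=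
  rfl

lemma hasDerivAt_physHermite_mul_exp (n : ℕ) (x : ℝ) :
    HasDerivAt (fun y ↦ physHermite n y * Real.exp (-y ^ 2))
      (-(physHermite (n + 1) x * Real.exp (-x ^ 2))) x := by
  have hexp (x : ℝ) : HasDerivAt (fun y ↦ Real.exp (-y ^ 2)) (-(2 * x) * Real.exp (-x ^ 2)) x := by
    simpa [mul_comm] using ((hasDerivAt_pow 2 x).neg).exp
  induction n using Nat.twoStepInduction generalizing x with
  | zero => simpa [physHermite] using hexp x
  | one =>
    refine ((((hasDerivAt_id x).const_mul 2).mul (hexp x)).congr_of_eventuallyEq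
      (.of_forall fun y ↦ ?_)).congr_deriv ?_
    · simp [physHermite]
    · simp only [physHermite, id]; ring
  | more n ih₁ ih₂ =>
    refine ((((hasDerivAt_id x).const_mul 2).mul (ih₂ x)).sub
      ((ih₁ x).const_mul (2 * (n + 1 : ℝ)))).congr_of_eventuallyEq
      (.of_forall fun y ↦ ?_) |>.congr_deriv ?_
    · simp only [physHermite_add_two, id, Pi.mul_apply, Pi.sub_apply]; ring
    · rw [physHermite_add_two (n + 1)]; simp only [id]; push_cast; ring

lemma integrable_pow_mul_exp_neg_sq (k : ℕ) :
    Integrable fun x : ℝ ↦ x ^ k * Real.exp (-x ^ 2) := by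
  simpa [Real.rpow_natCast] using integrable_rpow_mul_exp_neg_mul_sq one_pos
    (s := k) (neg_one_lt_zero.trans_le k.cast_nonneg)

lemma integrable_pow_mul_physHermite_mul_exp (k n : ℕ) :
    Integrable fun x : ℝ ↦ x ^ k * physHermite n x * Real.exp (-x ^ 2) := by
  induction n using Nat.twoStepInduction generalizing k with
  | zero => simpa [physHermite] using integrable_pow_mul_exp_neg_sq k
  | one =>
    convert (integrable_pow_mul_exp_neg_sq (k + 1)).const_mul 2 using 2
    simp only [physHermite]; ring
  | more n ih₁ ih₂ =>
    convert ((ih₂ (k + 1)).const_mul 2).sub ((ih₁ k).const_mul (2 * (n + 1 : ℝ))) using 2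
    simp only [physHermite_add_two, Pi.sub_apply]; ring

noncomputable def hermiteMoment (k n : ℕ) : ℝ :=
  ∫ x : ℝ, x ^ k * physHermite n x * Real.exp (-x ^ 2)

-- At `k = 0` the truncated `k - 1` is harmless: the factor `k` vanishes.
lemma hermiteMoment_succ (k n : ℕ) :
    hermiteMoment k (n + 1) = k * hermiteMoment (k - 1) n := by
  have hderiv : ∀ x : ℝ, HasDerivAt (fun y ↦ y ^ k * (physHermite n y * Real.exp (-y ^ 2)))
      (k * (x ^ (k - 1) * physHermite n x * Real.exp (-x ^ 2))
        - x ^ k * physHermite (n + 1) x * Real.exp (-x ^ 2)) x := fun x ↦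
    ((hasDerivAt_pow k x).mul (hasDerivAt_physHermite_mul_exp n x)).congr_deriv (by ring)
  have h := integral_eq_zero_of_hasDerivAt_of_integrable hderiv
    (((integrable_pow_mul_physHermite_mul_exp _ _).const_mul _).sub
      (integrable_pow_mul_physHermite_mul_exp _ _))
    (by simpa only [mul_assoc] using integrable_pow_mul_physHermite_mul_exp k n)
  rw [integral_sub ((integrable_pow_mul_physHermite_mul_exp _ _).const_mul _)
    (integrable_pow_mul_physHermite_mul_exp _ _), integral_const_mul, sub_eq_zero] at h
  exact h.symm

lemma hermiteMoment_of_lt {k n : ℕ} (h : k < n) : hermiteMoment k n = 0 := by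
  induction n generalizing k with
  | zero => omega
  | succ n ih =>
    rw [hermiteMoment_succ]
    rcases k with _ | k
    · simp
    · rw [ih (by omega), mul_zero]

lemma hermiteMoment_self (n : ℕ) : hermiteMoment n n = n.factorial * √π := by
  induction n with
  | zero => simpa [hermiteMoment, physHermite] using integral_gaussian 1
  | succ n ih => rw [hermiteMoment_succ, Nat.add_sub_cancel, ih, Nat.factorial_succ]; push_cast; ring

lemma hermiteMoment_succ_zero (k : ℕ) : hermiteMoment (k + 1) 0 = hermiteMoment k 1 / 2 := by
  rw [eq_div_iff two_ne_zero, hermiteMoment, hermiteMoment, ← integral_mul_const]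
  congr 1 with x
  simp only [physHermite]
  ring

lemma hermiteMoment_one_zero : hermiteMoment 1 0 = 0 := by
  rw [hermiteMoment_succ_zero, hermiteMoment_of_lt one_pos, zero_div]

lemma hermiteMoment_two_one : hermiteMoment 2 1 = 0 := by
  rw [hermiteMoment_succ, hermiteMoment_one_zero, mul_zero]

lemma hermiteMoment_two_zero : hermiteMoment 2 0 = √π / 2 := by
  rw [hermiteMoment_succ_zero, hermiteMoment_succ, hermiteMoment_self]; simp

lemma awHermite_eq_awHermite_one_zero (α u : ℝ) (n : ℕ) (v : ℝ) :
    awHermite α u n v = awHermite 1 0 n ((v - u) / α) := by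
  simp [awHermite]

lemma pow_mul_awHermite_one_zero (k n : ℕ) (x : ℝ) :
    x ^ k * awHermite 1 0 n x = (√(π * 2 ^ n * n.factorial))⁻¹ *
      (x ^ k * physHermite n x * Real.exp (-x ^ 2)) := by
  simp only [awHermite, sub_zero, div_one]; ring

lemma integral_pow_mul_sum_awHermite (c : ℕ → ℝ) {k N : ℕ} (hk : k ≤ N) :
    ∫ x, x ^ k * ∑ m ∈ range (N + 1), c m * awHermite 1 0 m x
      = ∑ m ∈ range (k + 1), c m * ((√(π * 2 ^ m * m.factorial))⁻¹ * hermiteMoment k m) := by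
  have hint (m : ℕ) : Integrable fun x : ℝ ↦ c m * (x ^ k * awHermite 1 0 m x) := by
    simpa only [pow_mul_awHermite_one_zero] using
      ((integrable_pow_mul_physHermite_mul_exp k m).const_mul _).const_mul (c m)
  simp_rw [mul_sum, mul_left_comm _ (c _)]
  rw [integral_finsetSum _ fun m _ ↦ hint m]
  simp_rw [integral_const_mul, pow_mul_awHermite_one_zero, integral_const_mul, ← hermiteMoment.eq_1]
  refine (sum_subset (range_subset_range.2 (by omega)) fun m hm hmk ↦ ?_).symm
  rw [hermiteMoment_of_lt (by simp at hm hmk; omega), mul_zero, mul_zero]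

lemma integrable_pow_mul_sum_awHermite (c : ℕ → ℝ) (k N : ℕ) :
    Integrable fun x : ℝ ↦ x ^ k * ∑ m ∈ range (N + 1), c m * awHermite 1 0 m x := by
  simp_rw [mul_sum, mul_left_comm _ (c _), pow_mul_awHermite_one_zero]
  exact integrable_finsetSum _ fun m _ ↦
    ((integrable_pow_mul_physHermite_mul_exp k m).const_mul _).const_mul (c m)

-- Mean and variance of an unnormalised, possibly signed, density; both are `0` when `∫ f = 0`.
noncomputable def densityMean (f : ℝ → ℝ) : ℝ :=
  (∫ v, v * f v) / ∫ v, f v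

noncomputable def densityVariance (f : ℝ → ℝ) : ℝ :=
  (∫ v, (v - densityMean f) ^ 2 * f v) / ∫ v, f v

lemma integral_comp_sub_div {E : Type*} [NormedAddCommGroup E] [NormedSpace ℝ E]
    (h : ℝ → E) (u α : ℝ) : ∫ v, h ((v - u) / α) = |α| • ∫ x, h x := by
  rw [integral_sub_right_eq_self (fun w ↦ h (w / α)) u, Measure.integral_comp_div]

section Affine

variable {g : ℝ → ℝ} {α : ℝ} (u : ℝ)

lemma densityMean_comp_affine (hg₀ : Integrable g) (hg₁ : Integrable fun x ↦ x * g x)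
    (hα : α ≠ 0) (hG : ∫ x, g x ≠ 0) :
    densityMean (fun v ↦ g ((v - u) / α)) = α * densityMean g + u := by
  have hnum : ∫ v, v * g ((v - u) / α) = |α| * (α * (∫ x, x * g x) + u * ∫ x, g x) :=
    calc ∫ v, v * g ((v - u) / α)
        = ∫ v, α * ((v - u) / α * g ((v - u) / α)) + u * g ((v - u) / α) := by
          congr 1 with v; field_simp; ring
      _ = |α| • ∫ x, α * (x * g x) + u * g x :=
          integral_comp_sub_div (fun x ↦ α * (x * g x) + u * g x) u α
      _ = _ := by
          rw [integral_add (hg₁.const_mul α) (hg₀.const_mul u), integral_const_mul,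
            integral_const_mul, smul_eq_mul]
  rw [densityMean, densityMean, hnum, integral_comp_sub_div (fun x ↦ g x), smul_eq_mul]
  field_simp

lemma densityVariance_comp_affine (hg₀ : Integrable g) (hg₁ : Integrable fun x ↦ x * g x)
    (hα : α ≠ 0) :
    densityVariance (fun v ↦ g ((v - u) / α)) = α ^ 2 * densityVariance g := by
  by_cases hG : ∫ x, g x = 0
  · simp [densityVariance, integral_comp_sub_div (fun x ↦ g x), hG]
  have hnum : ∫ v, (v - densityMean fun v ↦ g ((v - u) / α)) ^ 2 * g ((v - u) / α)
      = |α| * (α ^ 2 * ∫ x, (x - densityMean g) ^ 2 * g x) :=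
    calc ∫ v, (v - densityMean fun v ↦ g ((v - u) / α)) ^ 2 * g ((v - u) / α)
        = ∫ v, α ^ 2 * (((v - u) / α - densityMean g) ^ 2 * g ((v - u) / α)) := by
          rw [densityMean_comp_affine u hg₀ hg₁ hα hG]
          congr 1 with v; field_simp; ring
      _ = |α| • ∫ x, α ^ 2 * ((x - densityMean g) ^ 2 * g x) :=
          integral_comp_sub_div (fun x ↦ α ^ 2 * ((x - densityMean g) ^ 2 * g x)) u α
      _ = _ := by rw [integral_const_mul, smul_eq_mul]
  rw [densityVariance, densityVariance, hnum, integral_comp_sub_div (fun x ↦ g x), smul_eq_mul]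
  field_simp

end Affine

lemma densityVariance_eq {g : ℝ → ℝ} (hg₀ : Integrable g) (hg₁ : Integrable fun x ↦ x * g x)
    (hg₂ : Integrable fun x ↦ x ^ 2 * g x) :
    densityVariance g
      = (∫ x, x ^ 2 * g x) / (∫ x, g x) - ((∫ x, x * g x) / ∫ x, g x) ^ 2 := by
  by_cases hG : ∫ x, g x = 0
  · simp [densityVariance, hG]
  set m := densityMean g with hm
  have hexpand : ∫ x, (x - m) ^ 2 * g x
      = (∫ x, x ^ 2 * g x) - 2 * m * (∫ x, x * g x) + m ^ 2 * ∫ x, g x :=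
    calc ∫ x, (x - m) ^ 2 * g x
        = ∫ x, (x ^ 2 * g x - 2 * m * (x * g x)) + m ^ 2 * g x := by congr 1 with x; ring
      _ = _ := by
          rw [integral_add (f := fun x ↦ x ^ 2 * g x - 2 * m * (x * g x))
            (hg₂.sub (hg₁.const_mul _)) (hg₀.const_mul _),
            integral_sub hg₂ (hg₁.const_mul _), integral_const_mul, integral_const_mul]
  rw [densityVariance, hexpand, hm, densityMean]
  field_simp
  ring

/-- Physics-based update formula for the Hermite scaling parameter. -/
theorem hermite_scaling_update (N : ℕ) (hN : 2 ≤ N) (α u : ℝ) (hα : 0 < α)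
    (c : ℕ → ℝ) (hc0 : c 0 ≠ 0) (f : ℝ → ℝ)
    (hf : ∀ v : ℝ, f v = ∑ m ∈ Finset.range (N + 1), c m * awHermite α u m v)
    (ubar : ℝ) (hubar : ubar = (∫ v : ℝ, v * f v) / (∫ v : ℝ, f v)) :
    2 * (∫ v : ℝ, (v - ubar) ^ 2 * f v) / (∫ v : ℝ, f v)
      = α ^ 2 * (1 + Real.sqrt 2 * (c 2 / c 0) - (c 1 / c 0) ^ 2) := by
  set g : ℝ → ℝ := fun x ↦ ∑ m ∈ range (N + 1), c m * awHermite 1 0 m x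
  have hfg : f = fun v ↦ g ((v - u) / α) := by
    funext v; simp only [hf, g, ← awHermite_eq_awHermite_one_zero]
  have hg₀ : Integrable g := by simpa using integrable_pow_mul_sum_awHermite c 0 N
  have hg₁ : Integrable fun x ↦ x * g x := by simpa using integrable_pow_mul_sum_awHermite c 1 N
  have hg₂ : Integrable fun x ↦ x ^ 2 * g x := integrable_pow_mul_sum_awHermite c 2 N
  have hG₀ : ∫ x, g x = c 0 := by
    have h := integral_pow_mul_sum_awHermite c (N := N) (k := 0) (by omega)
    simp only [pow_zero, one_mul] at h
    exact h.trans (by simp [hermiteMoment_self]; field_simp)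
  have hG₁ : ∫ x, x * g x = c 1 / √2 := by
    have h := integral_pow_mul_sum_awHermite c (N := N) (k := 1) (by omega)
    simp only [pow_one] at h
    exact h.trans (by simp [sum_range_succ, hermiteMoment_one_zero, hermiteMoment_self]; field_simp)
  have hG₂ : ∫ x, x ^ 2 * g x = c 0 / 2 + c 2 / √2 := by
    refine (integral_pow_mul_sum_awHermite c hN).trans ?_
    simp [sum_range_succ, hermiteMoment_two_zero, hermiteMoment_self,
      hermiteMoment_two_one]
    field_simp
  have hvar : 2 * (∫ v, (v - ubar) ^ 2 * f v) / (∫ v, f v) = 2 * densityVariance f := by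
    rw [hubar, mul_div_assoc, densityVariance, densityMean]
  rw [hvar, hfg, densityVariance_comp_affine u hg₀ hg₁ hα.ne', densityVariance_eq hg₀ hg₁ hg₂,
    hG₀, hG₁, hG₂]
  field_simp
  linear_combination (c 1 ^ 2 - c 0 * c 2 * √2) * sq_sqrt (zero_le_two (α := ℝ))
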